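/- For every separable complex Banach space X there exists a ℂ-linear isometry T : X → ℓ∞ such that the only element of the range of T lying in c0 is 0; that is, every separable Banach space has an isometric linear copy inside (ℓ∞ \ c0) ∪ {0}. -/

import Mathlib

open Filter Topology ENNReal

noncomputable section

/-- `ℓ∞`, the bounded complex sequences. -/
abbrev linf : Type := lp (fun _ : ℕ => ℂ) ∞

/-- `c₀`, the elements of `ℓ∞` tending to zero. -/
def c0 : Set linf := {f | Tendsto (fun n => (f : ∀ _ : ℕ, ℂ) n) atTop (𝓝 0)}

/-!
Let `(fₖ)` be norm-one functionals attaining the norm at the points of a dense sequence; then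
`x ↦ (fₖ x)ₖ` is a linear isometry into `ℓ∞`. Listing every `fₖ` infinitely often, an image
vector that tends to zero must vanish in every coordinate `fₖ x`, so it is zero.
-/

section NormingFunctionals

variable {𝕜 E ι : Type*} [RCLike 𝕜] [NormedAddCommGroup E] [NormedSpace 𝕜 E]

variable (𝕜 E) in
theorem exists_seq_strongDual_norming [TopologicalSpace.SeparableSpace E] :
    ∃ f : ℕ → StrongDual 𝕜 E, (∀ n, ‖f n‖ ≤ 1) ∧ ∀ x : E, ∀ ε > 0, ∃ n, ‖x‖ ≤ ‖f n x‖ + ε := by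
  obtain ⟨u, hu⟩ := TopologicalSpace.exists_dense_seq E
  choose f hf_le hf_attains using fun n => exists_dual_vector'' 𝕜 (u n)
  refine ⟨f, hf_le, fun x ε hε => ?_⟩
  obtain ⟨n, hn⟩ := hu.exists_dist_lt x (half_pos hε)
  rw [dist_eq_norm] at hn
  have h_near : ‖f n (u n - x)‖ ≤ ‖x - u n‖ := by
    rw [norm_sub_rev]
    simpa using (f n).le_of_opNorm_le (hf_le n) (u n - x)
  have h_attains : ‖f n (u n)‖ = ‖u n‖ := by simp [hf_attains n]
  refine ⟨n, ?_⟩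
  calc ‖x‖ ≤ ‖u n‖ + ‖x - u n‖ := norm_le_insert' x (u n)
    _ ≤ ‖f n x‖ + ‖f n (u n - x)‖ + ‖x - u n‖ := by
        rw [← h_attains, map_sub]
        gcongr
        exact norm_le_insert' _ _
    _ ≤ ‖f n x‖ + ε := by linarith

namespace StrongDual

def toLpInfty (f : ι → StrongDual 𝕜 E) (hf : ∀ i, ‖f i‖ ≤ 1) :
    E →ₗ[𝕜] lp (fun _ : ι => 𝕜) ∞ where
  toFun x := ⟨fun i => f i x, memℓp_infty ⟨‖x‖, by
    rintro _ ⟨i, rfl⟩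
    simpa using (f i).le_of_opNorm_le (hf i) x⟩⟩
  map_add' x y := lp.ext <| funext fun i => map_add (f i) x y
  map_smul' c x := lp.ext <| funext fun i => map_smul (f i) c x

variable {f : ι → StrongDual 𝕜 E} {hf : ∀ i, ‖f i‖ ≤ 1}

@[simp]
theorem toLpInfty_apply (x : E) (i : ι) : toLpInfty f hf x i = f i x := rfl

theorem norm_toLpInfty_le (x : E) : ‖toLpInfty f hf x‖ ≤ ‖x‖ :=
  lp.norm_le_of_forall_le (norm_nonneg x) fun i => by
    simpa using (f i).le_of_opNorm_le (hf i) x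

theorem le_norm_toLpInfty (hnorming : ∀ x : E, ∀ ε > 0, ∃ i, ‖x‖ ≤ ‖f i x‖ + ε) (x : E) :
    ‖x‖ ≤ ‖toLpInfty f hf x‖ := by
  refine le_of_forall_pos_le_add fun ε hε => ?_
  obtain ⟨i, hi⟩ := hnorming x ε hε
  have := lp.norm_apply_le_norm ENNReal.top_ne_zero (toLpInfty f hf x) i
  rw [toLpInfty_apply] at this
  linarith

def toLpInftyₗᵢ (f : ι → StrongDual 𝕜 E) (hf : ∀ i, ‖f i‖ ≤ 1)
    (hnorming : ∀ x : E, ∀ ε > 0, ∃ i, ‖x‖ ≤ ‖f i x‖ + ε) :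
    E →ₗᵢ[𝕜] lp (fun _ : ι => 𝕜) ∞ :=
  { toLpInfty f hf with
    norm_map' x := le_antisymm (norm_toLpInfty_le x) (le_norm_toLpInfty hnorming x) }

end StrongDual

end NormingFunctionals

theorem eq_of_tendsto_comp_unpair_fst {α : Type*} [TopologicalSpace α] [T2Space α]
    {a : ℕ → α} {l : α} (h : Tendsto (fun n : ℕ => a n.unpair.1) atTop (𝓝 l)) (k : ℕ) :
    a k = l := by
  have h_pair : Tendsto (Nat.pair k) atTop atTop :=
    tendsto_atTop_mono (Nat.right_le_pair k) tendsto_id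
  have h_const : Tendsto (fun _ : ℕ => a k) atTop (𝓝 l) := by
    simpa [Function.comp_def, Nat.unpair_pair] using h.comp h_pair
  exact tendsto_nhds_unique tendsto_const_nhds h_const

theorem exists_linear_isometric_copy_of_separable_banach_space_avoiding_c0_general
    (X : Type*) [NormedAddCommGroup X] [NormedSpace ℂ X]
    [TopologicalSpace.SeparableSpace X] :
    ∃ T : X →ₗᵢ[ℂ] linf, ∀ y ∈ Set.range T, y ∈ c0 → y = 0 := by
  obtain ⟨f, hf_le, hf_norming⟩ := exists_seq_strongDual_norming ℂ X
  let g : ℕ → StrongDual ℂ X := fun n => f n.unpair.1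
  have hg_norming : ∀ x : X, ∀ ε > 0, ∃ n, ‖x‖ ≤ ‖g n x‖ + ε := fun x ε hε => by
    obtain ⟨k, hk⟩ := hf_norming x ε hε
    exact ⟨Nat.pair k 0, by simpa [g, Nat.unpair_pair] using hk⟩
  refine ⟨StrongDual.toLpInftyₗᵢ g (fun n => hf_le _) hg_norming, ?_⟩
  rintro _ ⟨x, rfl⟩ hx
  have hfx : ∀ k, f k x = 0 := eq_of_tendsto_comp_unpair_fst (a := fun k => f k x) hx
  exact lp.ext <| funext fun n => hfx _

/-- **Theorem 4.1, second part.** Every separable complex Banach space `X` admits a linear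
isometric copy inside `(ℓ∞ \ c₀) ∪ {0}`: there is a `ℂ`-linear isometry `T : X → ℓ∞` whose
range meets `c₀` only at `0`. -/
theorem exists_linear_isometric_copy_of_separable_banach_space_avoiding_c0
    (X : Type*) [NormedAddCommGroup X] [NormedSpace ℂ X] [CompleteSpace X]
    [TopologicalSpace.SeparableSpace X] :
    ∃ T : X →ₗᵢ[ℂ] linf, ∀ y ∈ Set.range T, y ∈ c0 → y = 0 :=
  exists_linear_isometric_copy_of_separable_banach_space_avoiding_c0_general X
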